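/- Let V ⊆ ℂⁿ be a subspace with dim V = m ≥ 2 on which the restriction of ⟨·,·⟩ is nondegenerate (i.e. V ∩ V^⊥ = 0). Then for every subspace W ⊆ ℂⁿ with ℂⁿ = V ⊕ W, the subspace K(V,W) = {a ∈ ℂⁿ : Q_a(v,v') ∈ W for all v, v' ∈ V} has dimension at most n − m, and its dimension equals n − m if and only if W = V^⊥. In particular, the only complement W for which dim K(V,W) = n − m is the annihilator of V with respect to ⟨·,·⟩. -/
import Mathlib


noncomputable section

/-- The standard symmetric bilinear form `⟨x,y⟩ = ∑ₛ xₛ yₛ` on `ℂⁿ`. -/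
def sbilin {n : ℕ} (x y : Fin n → ℂ) : ℂ := ∑ s, x s * y s

/-- The annihilator `V^⊥ = {w : ⟨v,w⟩ = 0 ∀ v ∈ V}` with respect to `sbilin`. -/
def perp (n : ℕ) (V : Submodule ℂ (Fin n → ℂ)) : Submodule ℂ (Fin n → ℂ) where
  carrier := {w | ∀ v ∈ V, sbilin v w = 0}
  zero_mem' := by intro v hv; simp [sbilin]
  add_mem' := by
    intro a b ha hb v hv
    have h1 := ha v hv
    have h2 := hb v hv
    simp only [sbilin, Pi.add_apply, mul_add, Finset.sum_add_distrib] at *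
    simp [h1, h2]
  smul_mem' := by
    intro c a ha v hv
    have h := ha v hv
    simp only [sbilin, Pi.smul_apply, smul_eq_mul] at *
    calc ∑ s, v s * (c * a s) = c * ∑ s, v s * a s := by
          rw [Finset.mul_sum]; exact Finset.sum_congr rfl fun s _ => by ring
      _ = 0 := by rw [h, mul_zero]

/-- The 2-jet `Q_a(v,w) = −⟨v,w⟩·a + ⟨a,v⟩·w + ⟨a,w⟩·v` of a global holomorphic
vector field on the hyperquadric vanishing to second order at the reference point. -/
def Qmap {n : ℕ} (a v w : Fin n → ℂ) : Fin n → ℂ :=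
  (-(sbilin v w)) • a + (sbilin a v) • w + (sbilin a w) • v

theorem sbilin_add_left {n : ℕ} (a b v : Fin n → ℂ) :
    sbilin (a + b) v = sbilin a v + sbilin b v := by
  simp [sbilin, Pi.add_apply, add_mul, Finset.sum_add_distrib]

theorem sbilin_smul_left {n : ℕ} (c : ℂ) (a v : Fin n → ℂ) :
    sbilin (c • a) v = c * sbilin a v := by
  simp only [sbilin, Pi.smul_apply, smul_eq_mul, Finset.mul_sum]
  exact Finset.sum_congr rfl fun s _ => by ring

/-- `K(V,W) = {a : Q_a(v,v') ∈ W for all v, v' ∈ V}`. -/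
def Kspace (n : ℕ) (V W : Submodule ℂ (Fin n → ℂ)) : Submodule ℂ (Fin n → ℂ) where
  carrier := {a | ∀ v ∈ V, ∀ v' ∈ V, Qmap a v v' ∈ W}
  zero_mem' := by
    intro v hv v' hv'
    have : Qmap (0 : Fin n → ℂ) v v' = 0 := by simp [Qmap, sbilin]
    rw [this]; exact W.zero_mem
  add_mem' := by
    intro a b ha hb v hv v' hv'
    have : Qmap (a + b) v v' = Qmap a v v' + Qmap b v v' := by
      simp only [Qmap, sbilin_add_left]
      module
    rw [this]; exact W.add_mem (ha v hv v' hv') (hb v hv v' hv')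
  smul_mem' := by
    intro c a ha v hv v' hv'
    have : Qmap (c • a) v v' = c • Qmap a v v' := by
      simp only [Qmap, sbilin_smul_left]
      module
    rw [this]; exact W.smul_mem c (ha v hv v' hv')

end

noncomputable section

open Module

theorem sbilin_comm {n : ℕ} (x y : Fin n → ℂ) : sbilin x y = sbilin y x := by
  simp only [sbilin]; exact Finset.sum_congr rfl fun s _ => mul_comm _ _

theorem sbilin_add_right {n : ℕ} (a v w : Fin n → ℂ) :
    sbilin a (v + w) = sbilin a v + sbilin a w := by
  rw [sbilin_comm, sbilin_add_left, sbilin_comm v a, sbilin_comm w a]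

theorem sbilin_smul_right {n : ℕ} (c : ℂ) (a v : Fin n → ℂ) :
    sbilin a (c • v) = c * sbilin a v := by
  rw [sbilin_comm, sbilin_smul_left, sbilin_comm]

/-- `sbilin` as a bilinear form. -/
def sbilinForm (n : ℕ) : LinearMap.BilinForm ℂ (Fin n → ℂ) :=
  LinearMap.mk₂ ℂ sbilin sbilin_add_left (fun c a v => sbilin_smul_left c a v)
    sbilin_add_right (fun c a v => sbilin_smul_right c a v)

theorem sbilinForm_apply {n : ℕ} (x y : Fin n → ℂ) : sbilinForm n x y = sbilin x y := rfl

theorem perp_eq_orthogonal (n : ℕ) (V : Submodule ℂ (Fin n → ℂ)) :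
    perp n V = (sbilinForm n).orthogonal V := by
  ext a
  simp only [LinearMap.BilinForm.mem_orthogonal_iff, LinearMap.BilinForm.isOrtho_def,
    sbilinForm_apply]
  rfl

theorem sbilinForm_isRefl (n : ℕ) : (sbilinForm n).IsRefl := by
  intro x y h
  rw [sbilinForm_apply, sbilin_comm] at h
  exact h

theorem isCompl_perp {n : ℕ} (V : Submodule ℂ (Fin n → ℂ))
    (hnd : V ⊓ perp n V = ⊥) : IsCompl V (perp n V) := by
  rw [perp_eq_orthogonal] at hnd ⊢
  exact LinearMap.BilinForm.isCompl_orthogonal_of_restrict_nondegenerate (sbilinForm_isRefl n)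
    ((sbilinForm n).nondegenerate_restrict_of_disjoint_orthogonal (sbilinForm_isRefl n)
      (disjoint_iff.mpr hnd))

theorem mem_perp {n : ℕ} {V : Submodule ℂ (Fin n → ℂ)} {w : Fin n → ℂ} :
    w ∈ perp n V ↔ ∀ v ∈ V, sbilin v w = 0 := Iff.rfl

theorem Qmap_add_left {n : ℕ} (a b v v' : Fin n → ℂ) :
    Qmap (a + b) v v' = Qmap a v v' + Qmap b v v' := by
  simp only [Qmap, sbilin_add_left]
  module

theorem Qmap_perp {n : ℕ} {V : Submodule ℂ (Fin n → ℂ)} {q v v' : Fin n → ℂ}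
    (hq : q ∈ perp n V) (hv : v ∈ V) (hv' : v' ∈ V) :
    Qmap q v v' = (-(sbilin v v')) • q := by
  have h1 : sbilin q v = 0 := by rw [sbilin_comm]; exact hq v hv
  have h2 : sbilin q v' = 0 := by rw [sbilin_comm]; exact hq v' hv'
  simp [Qmap, h1, h2]

/-- The key structural result: `K(V,W) = V^⊥ ⊓ W`. -/
theorem Kspace_eq_inf (n m : ℕ) (V : Submodule ℂ (Fin n → ℂ))
    (hm : Module.finrank ℂ V = m) (hm2 : 2 ≤ m)
    (hnd : V ⊓ perp n V = ⊥) (W : Submodule ℂ (Fin n → ℂ)) (hW : IsCompl V W) :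
    Kspace n V W = perp n V ⊓ W := by
  apply le_antisymm
  · -- hard direction: K ⊆ perp ⊓ W
    intro a ha
    -- decompose a = p + q with p ∈ V, q ∈ perp V
    have hcperp := isCompl_perp V hnd
    have hamem : a ∈ V ⊔ perp n V := by rw [hcperp.sup_eq_top]; trivial
    obtain ⟨p, hp, q, hq, hpq⟩ := Submodule.mem_sup.mp hamem
    -- decompose q = α + β with α ∈ V, β ∈ W
    have hqmem : q ∈ V ⊔ W := by rw [hW.sup_eq_top]; trivial
    obtain ⟨α, hα, β, hβ, hαβ⟩ := Submodule.mem_sup.mp hqmem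
    -- the key equation : Qmap p v v' = sbilin v v' • α for all v v' ∈ V
    have hE : ∀ v ∈ V, ∀ v' ∈ V, Qmap p v v' = (sbilin v v') • α := by
      intro v hv v' hv'
      have hQa : Qmap a v v' ∈ W := ha v hv v' hv'
      have hsplit : Qmap a v v' = Qmap p v v' - (sbilin v v') • α - (sbilin v v') • β := by
        rw [← hpq, Qmap_add_left, Qmap_perp hq hv hv', ← hαβ]
        module
      have hu : Qmap p v v' - (sbilin v v') • α ∈ V ⊓ W := by
        constructor
        · have hQp : Qmap p v v' ∈ V := by
            refine Submodule.add_mem V (Submodule.add_mem V ?_ ?_) ?_ <;>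
              exact Submodule.smul_mem V _ (by assumption)
          exact Submodule.sub_mem V hQp (Submodule.smul_mem V _ hα)
        · have : Qmap p v v' - (sbilin v v') • α = Qmap a v v' + (sbilin v v') • β := by
            rw [hsplit]; module
          rw [this]
          exact Submodule.add_mem W hQa (Submodule.smul_mem W _ hβ)
      rw [hW.inf_eq_bot, Submodule.mem_bot] at hu
      linear_combination (norm := module) hu
    -- step 1 : p = 0
    have hp0 : p = 0 := by
      by_contra hne
      have hpnotperp : p ∉ perp n V := by
        intro hmem
        have : p ∈ V ⊓ perp n V := Submodule.mem_inf.mpr ⟨hp, hmem⟩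
        rw [hnd, Submodule.mem_bot] at this
        exact hne this
      rw [mem_perp] at hpnotperp
      push_neg at hpnotperp
      obtain ⟨v₀, hv₀, hc⟩ := hpnotperp
      set c := sbilin v₀ p with hcdef
      have hcpv : sbilin p v₀ = c := by rw [sbilin_comm]
      have h1 := hE v₀ hv₀ v₀ hv₀
      simp only [Qmap, hcpv] at h1
      set d := sbilin v₀ v₀ with hddef
      -- h1 : (-d) • v₀ ... rearrangement: (2c) • v₀ = d • (α + p)
      have h2 : (2 * c) • v₀ = d • (α + p) := by
        linear_combination (norm := module) h1
      have hd0 : d ≠ 0 := by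
        intro hd
        rw [hd, zero_smul, smul_eq_zero] at h2
        rcases h2 with h | h
        · rcases mul_eq_zero.mp h with h' | h'
          · exact two_ne_zero h'
          · exact hc h'
        · rw [hcdef, h] at hc
          exact hc (by simp [sbilin])
      -- α + p = (2c/d) • v₀
      have hαp : α + p = (2 * c / d) • v₀ := by
        have := congrArg (fun x => d⁻¹ • x) h2
        simp only [smul_smul] at this
        rw [inv_mul_cancel₀ hd0, one_smul] at this
        rw [← this]
        congr 1
        rw [div_eq_mul_inv]
        ring
      -- now every v' ∈ V lies in span {v₀}
      have hspan : ∀ v' ∈ V, v' ∈ Submodule.span ℂ {v₀} := by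
        intro v' hv'
        have h3 := hE v₀ hv₀ v' hv'
        simp only [Qmap, hcpv] at h3
        -- h3 : -(sbilin v₀ v') • p + c • v' + sbilin p v' • v₀ = sbilin v₀ v' • α
        have h4 : c • v' = (sbilin v₀ v') • (α + p) - (sbilin p v') • v₀ := by
          linear_combination (norm := module) h3
        rw [hαp, smul_smul, ← sub_smul] at h4
        have : v' = (c⁻¹ * (sbilin v₀ v' * (2 * c / d) - sbilin p v')) • v₀ := by
          rw [mul_smul, ← h4, smul_smul, inv_mul_cancel₀ hc, one_smul]
        rw [this]
        exact Submodule.smul_mem _ _ (Submodule.mem_span_singleton_self v₀)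
      have hle : V ≤ Submodule.span ℂ {v₀} := hspan
      have hv₀ne : v₀ ≠ 0 := by
        intro h
        rw [hcdef, h] at hc
        exact hc (by simp [sbilin])
      have : m ≤ 1 := by
        rw [← hm]
        calc Module.finrank ℂ V ≤ Module.finrank ℂ (Submodule.span ℂ {v₀}) :=
              Submodule.finrank_mono hle
          _ = 1 := finrank_span_singleton hv₀ne
      omega
    -- step 2 : α = 0
    have hα0 : α = 0 := by
      -- pick v ∈ V, v ≠ 0
      have hVne : V ≠ ⊥ := by
        intro h
        rw [h, finrank_bot] at hm
        omega
      obtain ⟨v, hv, hvne⟩ := Submodule.exists_mem_ne_zero_of_ne_bot hVne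
      have hvnotperp : v ∉ perp n V := by
        intro hmem
        have : v ∈ V ⊓ perp n V := Submodule.mem_inf.mpr ⟨hv, hmem⟩
        rw [hnd, Submodule.mem_bot] at this
        exact hvne this
      rw [mem_perp] at hvnotperp
      push_neg at hvnotperp
      obtain ⟨u, hu, hcu⟩ := hvnotperp
      have h1 := hE u hu v hv
      rw [hp0] at h1
      have h2 : Qmap (0 : Fin n → ℂ) u v = 0 := by simp [Qmap, sbilin]
      rw [h2] at h1
      have := (smul_eq_zero.mp h1.symm).resolve_left hcu
      exact this
    -- conclude
    have haq : a = q := by rw [← hpq, hp0, zero_add]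
    have haβ : a = β := by rw [haq, ← hαβ, hα0, zero_add]
    exact Submodule.mem_inf.mpr ⟨haq ▸ hq, haβ ▸ hβ⟩
  · -- easy direction: perp ⊓ W ⊆ K
    intro a ha v hv v' hv'
    obtain ⟨haperp, haW⟩ := Submodule.mem_inf.mp ha
    rw [Qmap_perp haperp hv hv']
    exact Submodule.smul_mem W _ haW

/-- If the standard bilinear form restricted to `V` (with `dim V = m ≥ 2`) is
nondegenerate, then for every complement `W` of `V`, `dim K(V,W) ≤ n − m`, with
equality if and only if `W = V^⊥`. -/
theorem stmt5 (n m : ℕ) (V : Submodule ℂ (Fin n → ℂ))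
    (hm : Module.finrank ℂ V = m) (hm2 : 2 ≤ m)
    (hnd : V ⊓ perp n V = ⊥) :
    ∀ W : Submodule ℂ (Fin n → ℂ), IsCompl V W →
      Module.finrank ℂ ↥(Kspace n V W) ≤ n - m ∧
      (Module.finrank ℂ ↥(Kspace n V W) = n - m ↔ W = perp n V) := by
  intro W hW
  have hKeq := Kspace_eq_inf n m V hm hm2 hnd W hW
  have hcperp := isCompl_perp V hnd
  have hfin : Module.finrank ℂ (Fin n → ℂ) = n := by simp
  have hperp_rank : Module.finrank ℂ ↥(perp n V) = n - m := by
    have h := Submodule.finrank_add_eq_of_isCompl hcperp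
    rw [hm, hfin] at h
    omega
  have hW_rank : Module.finrank ℂ ↥W = n - m := by
    have h := Submodule.finrank_add_eq_of_isCompl hW
    rw [hm, hfin] at h
    omega
  have hle : Module.finrank ℂ ↥(Kspace n V W) ≤ n - m := by
    rw [hKeq, ← hperp_rank]
    exact Submodule.finrank_mono inf_le_left
  refine ⟨hle, ?_, ?_⟩
  · intro heq
    have h1 : perp n V ⊓ W = perp n V := by
      apply Submodule.eq_of_le_of_finrank_le inf_le_left
      rw [hperp_rank, ← heq, hKeq]
    have h2 : perp n V ≤ W := by rw [← h1]; exact inf_le_right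
    exact (Submodule.eq_of_le_of_finrank_le h2 (by rw [hperp_rank, hW_rank])).symm
  · intro hWeq
    rw [hKeq, hWeq, inf_idem, hperp_rank]

end
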